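/- Let 𝒳 := {(x,y) ∈ ℝ² : x ∈ [0,1], 0 ≤ y ≤ x²} and let Q be the uniform probability distribution on 𝒳. Then (i) sup_{L>0} L^{1/2} ∫_𝒳 exp(−L·δ(z)²) dQ(z) < ∞, where δ(z) is the Euclidean distance from z to 𝒳ᶜ (Condition (A) with d = 2 holds); but (ii) there is NO constant c > 0 such that |B(z,r) ∩ 𝒳| ≥ c·|B(z,r)| for all z ∈ 𝒳 and all 0 ≤ r ≤ diam(𝒳) (Condition (X2) fails). -/

import Mathlib

open MeasureTheory ProbabilityTheory Filter Set
open scoped ENNReal NNReal Classical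

noncomputable section

abbrev Euc (d : ℕ) : Type := EuclideanSpace ℝ (Fin d)

/-- Condition (X2) with constant `c`. -/
def CondX2 {d : ℕ} (𝒳 : Set (Euc d)) (c : ℝ) : Prop :=
  ∀ x ∈ 𝒳, ∀ r : ℝ, 0 ≤ r → r ≤ Metric.diam 𝒳 →
    ENNReal.ofReal c * volume (Metric.closedBall x r) ≤ volume (Metric.closedBall x r ∩ 𝒳)

/-- Condition (A): `sup_{L>0} L^{1/d} ∫ exp(−L δ(x)^d) dQ(x) < ∞`,
where `δ(x)` is the distance from `x` to `𝒳ᶜ`. -/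
def CondA {d : ℕ} (𝒳 : Set (Euc d)) (Q : Measure (Euc d)) : Prop :=
  ∃ M : ℝ, ∀ L : ℝ, 0 < L →
    L ^ ((1 : ℝ) / d) * ∫ x, Real.exp (-L * Metric.infDist x 𝒳ᶜ ^ d) ∂Q ≤ M

section Aux
open Metric Real


def Xset : Set (Euc 2) := {z | z 0 ∈ Icc (0 : ℝ) 1 ∧ z 1 ∈ Icc (0 : ℝ) ((z 0) ^ 2)}

lemma meas_coord (i : Fin 2) : Measurable fun z : Euc 2 => z i :=
  (EuclideanSpace.proj i).continuous.measurable

lemma measX : MeasurableSet Xset := by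
  apply MeasurableSet.inter
  · exact (meas_coord 0) measurableSet_Icc
  · apply MeasurableSet.inter
    · exact measurableSet_le measurable_const (meas_coord 1)
    · exact measurableSet_le (meas_coord 1) ((meas_coord 0).pow_const 2)

lemma gauss_lintegral {b : ℝ} (hb : 0 < b) (c : ℝ) :
    ∫⁻ y : ℝ, ENNReal.ofReal (Real.exp (-b * (y - c)^2)) = ENNReal.ofReal (Real.sqrt (Real.pi / b)) := by
  have h1 : ∫⁻ y : ℝ, ENNReal.ofReal (Real.exp (-b * (y - c)^2))
      = ∫⁻ y : ℝ, (fun t => ENNReal.ofReal (Real.exp (-b * t^2))) (y + -c) := by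
    simp_rw [sub_eq_add_neg]
  rw [h1, lintegral_add_right_eq_self (fun t => ENNReal.ofReal (Real.exp (-b * t^2))) (-c),
    ← ofReal_integral_eq_lintegral_ofReal (integrable_exp_neg_mul_sq hb)
      (Filter.Eventually.of_forall fun x => (Real.exp_pos _).le), integral_gaussian]

noncomputable def F2 : ℝ × ℝ → Euc 2 := fun p =>
  (MeasurableEquiv.toLp 2 (Fin 2 → ℝ)).symm.symm ((MeasurableEquiv.piFinTwo (fun _ : Fin 2 => ℝ)).symm p)

lemma F2_mp : MeasurePreserving F2 volume volume := by
  have h1 : MeasurePreserving ((MeasurableEquiv.toLp 2 (Fin 2 → ℝ)).symm.symm) volume volume :=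
    (EuclideanSpace.volume_preserving_symm_measurableEquiv_toLp (Fin 2)).symm _
  have h2 : MeasurePreserving ((MeasurableEquiv.piFinTwo (fun _ : Fin 2 => ℝ)).symm) volume volume :=
    (volume_preserving_piFinTwo _).symm _
  exact h1.comp h2

@[simp] lemma F2_apply0 (p : ℝ × ℝ) : F2 p 0 = p.1 := by
  simp [F2, MeasurableEquiv.coe_toLp, MeasurableEquiv.piFinTwo]

@[simp] lemma F2_apply1 (p : ℝ × ℝ) : F2 p 1 = p.2 := by
  simp [F2, MeasurableEquiv.coe_toLp, MeasurableEquiv.piFinTwo]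

lemma coord_le_dist (z w : Euc 2) (i : Fin 2) : |z i - w i| ≤ dist z w := by
  rw [EuclideanSpace.dist_eq, ← Real.sqrt_sq_eq_abs]
  apply Real.sqrt_le_sqrt
  have := Finset.single_le_sum (f := fun j => dist (z j) (w j) ^ 2) (fun j _ => sq_nonneg _) (Finset.mem_univ i)
  simpa [Real.dist_eq, sq_abs] using this

lemma key_geom (z : Euc 2) (hz : z ∈ Xset) :
    min (z 1) (min ((z 0 ^ 2 - z 1)/3) (1 - z 0)) ≤ Metric.infDist z Xsetᶜ := by
  obtain ⟨⟨hx0, hx1⟩, hy0, hyx⟩ := hz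
  set x := z 0; set y := z 1
  set m := min y (min ((x^2 - y)/3) (1 - x)) with hm
  have hm1 : m ≤ y := min_le_left _ _
  have hm2 : m ≤ (x^2 - y)/3 := le_trans (min_le_right _ _) (min_le_left _ _)
  have hm3 : m ≤ 1 - x := le_trans (min_le_right _ _) (min_le_right _ _)
  have hne : (Xsetᶜ).Nonempty := by
    refine ⟨(WithLp.equiv 2 (Fin 2 → ℝ)).symm ![2,0], ?_⟩
    simp [Xset, Set.mem_compl_iff, Set.mem_setOf_eq]
  by_contra hcon
  push_neg at hcon
  rw [Metric.infDist_lt_iff hne] at hcon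
  obtain ⟨w, hw, hdlt⟩ := hcon
  set u := w 0; set v := w 1
  have h0 : |x - u| ≤ dist z w := coord_le_dist z w 0
  have h1 : |y - v| ≤ dist z w := coord_le_dist z w 1
  rw [Set.mem_compl_iff] at hw
  have hxx : x^2 ≤ x := by nlinarith
  have goal : m ≤ dist z w := by
    by_cases hu0 : u < 0
    · calc m ≤ y := hm1
        _ ≤ x := le_trans hyx hxx
        _ ≤ x - u := by linarith
        _ ≤ |x - u| := le_abs_self _
        _ ≤ dist z w := h0
    by_cases hu1 : 1 < u
    · calc m ≤ 1 - x := hm3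
        _ ≤ u - x := by linarith
        _ ≤ |x - u| := by rw [abs_sub_comm]; exact le_abs_self _
        _ ≤ dist z w := h0
    by_cases hv0 : v < 0
    · calc m ≤ y := hm1
        _ ≤ y - v := by linarith
        _ ≤ |y - v| := le_abs_self _
        _ ≤ dist z w := h1
    push_neg at hu0 hu1 hv0
    have hvu : u^2 < v := by
      by_contra hle
      push_neg at hle
      exact hw ⟨⟨hu0, hu1⟩, hv0, hle⟩
    by_cases hs : (x^2 - y)/3 ≤ |x - u|
    · exact le_trans hm2 (le_trans hs h0)
    · push_neg at hs
      have habs := abs_le.mp (le_of_lt hs)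
      have hkey : (x^2 - y)/3 < v - y := by nlinarith [abs_nonneg (x - u)]
      calc m ≤ (x^2 - y)/3 := hm2
        _ ≤ v - y := hkey.le
        _ ≤ |y - v| := by rw [abs_sub_comm]; exact le_abs_self _
        _ ≤ dist z w := h1
  linarith

lemma lint_bound (L : ℝ) (hL : 0 < L) :
    ∫⁻ z, ENNReal.ofReal (Real.exp (-L * Metric.infDist z Xsetᶜ ^ 2)) ∂(volume.restrict Xset)
      ≤ ENNReal.ofReal (5 * Real.sqrt (Real.pi / L)) := by
  have hδc : Continuous fun z : Euc 2 => Metric.infDist z Xsetᶜ := continuous_infDist_pt _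
  have hgc : Continuous fun z : Euc 2 => Real.exp (-L * Metric.infDist z Xsetᶜ ^ 2) :=
    Real.continuous_exp.comp (continuous_const.mul (hδc.pow 2))
  set g : Euc 2 → ℝ≥0∞ := fun z => ENNReal.ofReal (Real.exp (-L * Metric.infDist z Xsetᶜ ^ 2)) with hgdef
  have hgm : Measurable g := ENNReal.measurable_ofReal.comp hgc.measurable
  rw [← lintegral_indicator measX]
  rw [← F2_mp.lintegral_comp (hgm.indicator measX)]
  set ind : ℝ → ℝ≥0∞ := (Icc (0:ℝ) 1).indicator 1 with hind
  have hindm : Measurable ind := (measurable_const.indicator measurableSet_Icc)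
  set G1 : ℝ × ℝ → ℝ≥0∞ := fun p => ind p.1 * ENNReal.ofReal (Real.exp (-L * p.2^2)) with hG1
  set G2 : ℝ × ℝ → ℝ≥0∞ := fun p => ind p.1 * ENNReal.ofReal (Real.exp (-(L/9) * (p.2 - p.1^2)^2)) with hG2
  set G3 : ℝ × ℝ → ℝ≥0∞ := fun p => ind p.2 * ENNReal.ofReal (Real.exp (-L * (p.1 - 1)^2)) with hG3
  have hcont_meas : ∀ (f : ℝ × ℝ → ℝ), Continuous f → Measurable fun p : ℝ × ℝ => ENNReal.ofReal (f p) :=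
    fun f hf => ENNReal.measurable_ofReal.comp hf.measurable
  have hG1m : Measurable G1 :=
    (hindm.comp measurable_fst).mul (hcont_meas _
      (Real.continuous_exp.comp (continuous_const.mul (continuous_snd.pow 2))))
  have hG2m : Measurable G2 :=
    (hindm.comp measurable_fst).mul (hcont_meas _
      (Real.continuous_exp.comp (continuous_const.mul ((continuous_snd.sub (continuous_fst.pow 2)).pow 2))))
  have hG3m : Measurable G3 :=
    (hindm.comp measurable_snd).mul (hcont_meas _
      (Real.continuous_exp.comp (continuous_const.mul ((continuous_fst.sub continuous_const).pow 2))))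
  -- pointwise bound
  have hpoint : ∀ p : ℝ × ℝ, Xset.indicator g (F2 p) ≤ G1 p + G2 p + G3 p := by
    intro p
    by_cases hmem : F2 p ∈ Xset
    · rw [Set.indicator_of_mem hmem]
      have hmem' := hmem
      simp only [Xset, Set.mem_setOf_eq, F2_apply0, F2_apply1, Set.mem_Icc] at hmem'
      obtain ⟨⟨hx0, hx1⟩, hy0, hyx⟩ := hmem'
      have hkey := key_geom (F2 p) hmem
      rw [F2_apply0, F2_apply1] at hkey
      set x := p.1; set y := p.2
      set m := min y (min ((x^2 - y)/3) (1 - x)) with hmdef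
      have hm0 : 0 ≤ m := le_min hy0 (le_min (by linarith) (by linarith))
      have hexp : g (F2 p) ≤ ENNReal.ofReal (Real.exp (-L * m^2)) := by
        apply ENNReal.ofReal_le_ofReal
        apply Real.exp_le_exp.mpr
        have hsq : m^2 ≤ Metric.infDist (F2 p) Xsetᶜ ^ 2 := pow_le_pow_left₀ hm0 hkey 2
        nlinarith
      have hindx : ind x = 1 := by
        rw [hind, Set.indicator_of_mem (Set.mem_Icc.mpr ⟨hx0, hx1⟩)]; rfl
      have hindy : ind y = 1 := by
        rw [hind, Set.indicator_of_mem (Set.mem_Icc.mpr ⟨hy0, by nlinarith⟩)]; rfl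
      rcases min_choice y (min ((x^2 - y)/3) (1 - x)) with h | h
      · have heq : ENNReal.ofReal (Real.exp (-L * m^2)) = G1 p := by
          rw [hG1]; dsimp only; rw [hindx, one_mul, hmdef, h]
        calc g (F2 p) ≤ G1 p := heq ▸ hexp
          _ ≤ G1 p + G2 p + G3 p := le_add_right (le_add_right (le_refl _))
      · rcases min_choice ((x^2 - y)/3) (1 - x) with h2 | h2
        · have heq : ENNReal.ofReal (Real.exp (-L * m^2)) = G2 p := by
            rw [hG2]; dsimp only; rw [hindx, one_mul, hmdef, h, h2]
            congr 1
            apply congrArg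
            show -L * ((p.1^2 - p.2)/3)^2 = -(L/9) * (p.2 - p.1^2)^2
            ring
          calc g (F2 p) ≤ G2 p := heq ▸ hexp
            _ ≤ G1 p + G2 p + G3 p :=
                le_trans le_add_self (le_add_right (le_refl _))
        · have heq : ENNReal.ofReal (Real.exp (-L * m^2)) = G3 p := by
            rw [hG3]; dsimp only; rw [hindy, one_mul, hmdef, h, h2]
            congr 1
            apply congrArg
            show -L * (1 - p.1)^2 = -L * (p.1 - 1)^2
            ring
          calc g (F2 p) ≤ G3 p := heq ▸ hexp
            _ ≤ G1 p + G2 p + G3 p := le_add_self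
    · rw [Set.indicator_of_notMem hmem]
      exact zero_le
  have hm1d : ∀ (f : ℝ → ℝ), Continuous f → Measurable fun y : ℝ => ENNReal.ofReal (f y) :=
    fun f hf => ENNReal.measurable_ofReal.comp hf.measurable
  have hIcc1 : (volume (Icc (0:ℝ) 1)) = 1 := by
    rw [Real.volume_Icc]; norm_num
  have hI1 : ∫⁻ p : ℝ × ℝ, G1 p = ENNReal.ofReal (Real.sqrt (π / L)) := by
    rw [Measure.volume_eq_prod, lintegral_prod _ hG1m.aemeasurable]
    have inner : ∀ x : ℝ, (∫⁻ y : ℝ, G1 (x, y)) = ind x * ENNReal.ofReal (Real.sqrt (π / L)) := by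
      intro x
      rw [hG1]; dsimp only
      have hmy : Measurable fun y : ℝ => ENNReal.ofReal (Real.exp (-L * y ^ 2)) :=
        hm1d _ (Real.continuous_exp.comp (continuous_const.mul (continuous_pow 2)))
      rw [lintegral_const_mul _ hmy]
      congr 1
      simpa using gauss_lintegral hL 0
    simp_rw [inner]
    rw [lintegral_mul_const _ hindm, hind, lintegral_indicator_one measurableSet_Icc, hIcc1, one_mul]
  have hI2 : ∫⁻ p : ℝ × ℝ, G2 p = ENNReal.ofReal (Real.sqrt (π / (L/9))) := by
    rw [Measure.volume_eq_prod, lintegral_prod _ hG2m.aemeasurable]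
    have inner : ∀ x : ℝ, (∫⁻ y : ℝ, G2 (x, y)) = ind x * ENNReal.ofReal (Real.sqrt (π / (L/9))) := by
      intro x
      rw [hG2]; dsimp only
      have hmy : Measurable fun y : ℝ => ENNReal.ofReal (Real.exp (-(L/9) * (y - x^2) ^ 2)) :=
        hm1d _ (Real.continuous_exp.comp (continuous_const.mul ((continuous_id.sub continuous_const).pow 2)))
      rw [lintegral_const_mul _ hmy]
      congr 1
      exact gauss_lintegral (by positivity) (x^2)
    simp_rw [inner]
    rw [lintegral_mul_const _ hindm, hind, lintegral_indicator_one measurableSet_Icc, hIcc1, one_mul]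
  have hI3 : ∫⁻ p : ℝ × ℝ, G3 p = ENNReal.ofReal (Real.sqrt (π / L)) := by
    rw [Measure.volume_eq_prod, lintegral_prod _ hG3m.aemeasurable]
    have inner : ∀ x : ℝ, (∫⁻ y : ℝ, G3 (x, y)) = ENNReal.ofReal (Real.exp (-L * (x - 1)^2)) := by
      intro x
      rw [hG3]; dsimp only
      rw [lintegral_mul_const _ hindm, hind, lintegral_indicator_one measurableSet_Icc, hIcc1, one_mul]
    simp_rw [inner]
    exact gauss_lintegral hL 1
  calc ∫⁻ p : ℝ × ℝ, Xset.indicator g (F2 p)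
      ≤ ∫⁻ p : ℝ × ℝ, (G1 p + G2 p + G3 p) := lintegral_mono hpoint
    _ = (∫⁻ p : ℝ × ℝ, G1 p) + (∫⁻ p : ℝ × ℝ, G2 p) + (∫⁻ p : ℝ × ℝ, G3 p) := by
        rw [lintegral_add_left (f := fun p => G1 p + G2 p) (hG1m.add hG2m), lintegral_add_left hG1m]
    _ = ENNReal.ofReal (Real.sqrt (π / L)) + ENNReal.ofReal (Real.sqrt (π / (L/9)))
        + ENNReal.ofReal (Real.sqrt (π / L)) := by rw [hI1, hI2, hI3]
    _ = ENNReal.ofReal (5 * Real.sqrt (π / L)) := by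
        have h9 : Real.sqrt (π / (L/9)) = 3 * Real.sqrt (π / L) := by
          rw [show π / (L/9) = 9 * (π / L) by field_simp; try ring,
            Real.sqrt_mul (by norm_num : (0:ℝ) ≤ 9),
            show Real.sqrt 9 = 3 by
              rw [show (9:ℝ) = 3^2 by norm_num, Real.sqrt_sq (by norm_num : (0:ℝ) ≤ 3)]]
        rw [h9, ← ENNReal.ofReal_add (by positivity) (by positivity),
          ← ENNReal.ofReal_add (by positivity) (by positivity)]
        congr 1
        ring

-- the vol_box lemma from t4
lemma vol_box' (s t : Set ℝ) (hs : MeasurableSet s) (ht : MeasurableSet t) :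
    volume {z : Euc 2 | z 0 ∈ s ∧ z 1 ∈ t} = volume s * volume t := by
  have h := EuclideanSpace.volume_preserving_symm_measurableEquiv_toLp (Fin 2)
  have hB : MeasurableSet (univ.pi fun i : Fin 2 => if i = 0 then s else t) :=
    MeasurableSet.univ_pi (fun i => by split <;> assumption)
  have he : {z : Euc 2 | z 0 ∈ s ∧ z 1 ∈ t} =
      (MeasurableEquiv.toLp 2 (Fin 2 → ℝ)).symm ⁻¹' (univ.pi fun i : Fin 2 => if i = 0 then s else t) := by
    ext z
    constructor
    · rintro ⟨h1, h2⟩ i -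
      fin_cases i <;> simp [MeasurableEquiv.coe_toLp_symm, *]
    · intro hz
      have h0 := hz 0 (mem_univ _)
      have h1 := hz 1 (mem_univ _)
      simp [MeasurableEquiv.coe_toLp_symm] at h0 h1
      exact ⟨h0, h1⟩
  rw [he, h.measure_preimage hB.nullMeasurableSet, volume_pi, Measure.pi_pi]
  simp [Fin.prod_univ_two]

lemma dist_zero_two (z : Euc 2) : dist z 0 = Real.sqrt ((z 0)^2 + (z 1)^2) := by
  rw [EuclideanSpace.dist_eq, Fin.sum_univ_two]
  simp [Real.dist_eq, sq_abs]

end Aux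

/-- Proposition 2, Example 1: for 𝒳 = {(x,y) : x ∈ [0,1], 0 ≤ y ≤ x²} with Q
the uniform distribution on 𝒳, Condition (A) holds but Condition (X2) fails. -/
theorem statement8 :
    let 𝒳 : Set (Euc 2) := {z | z 0 ∈ Icc (0 : ℝ) 1 ∧ z 1 ∈ Icc (0 : ℝ) ((z 0) ^ 2)}
    let Q : Measure (Euc 2) := (volume 𝒳)⁻¹ • volume.restrict 𝒳
    CondA 𝒳 Q ∧ ¬ ∃ c : ℝ, 0 < c ∧ CondX2 𝒳 c := by
  intro 𝒳 Q
  constructor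
  · -- Condition (A)
    refine ⟨40 * Real.sqrt Real.pi, fun L hL => ?_⟩
    have hcF : Continuous fun z : Euc 2 => Real.exp (-L * Metric.infDist z Xsetᶜ ^ 2) :=
      Real.continuous_exp.comp (continuous_const.mul ((Metric.continuous_infDist_pt _).pow 2))
    have hI := lint_bound L hL
    have heq1 : ∫ z, Real.exp (-L * Metric.infDist z Xsetᶜ ^ 2) ∂(volume.restrict Xset)
        = (∫⁻ z, ENNReal.ofReal (Real.exp (-L * Metric.infDist z Xsetᶜ ^ 2)) ∂(volume.restrict Xset)).toReal :=
      integral_eq_lintegral_of_nonneg_ae (Eventually.of_forall fun z => (Real.exp_pos _).le)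
        hcF.aestronglyMeasurable
    have hIle : ∫ z, Real.exp (-L * Metric.infDist z Xsetᶜ ^ 2) ∂(volume.restrict Xset)
        ≤ 5 * Real.sqrt (Real.pi / L) := by
      rw [heq1]
      exact ENNReal.toReal_le_of_le_ofReal (by positivity) hI
    have hInn : 0 ≤ ∫ z, Real.exp (-L * Metric.infDist z Xsetᶜ ^ 2) ∂(volume.restrict Xset) :=
      integral_nonneg fun z => (Real.exp_pos _).le
    have hvol : ENNReal.ofReal (1/8) ≤ volume Xset := by
      have hsub : {z : Euc 2 | z 0 ∈ Icc (1/2 : ℝ) 1 ∧ z 1 ∈ Icc (0:ℝ) (1/4)} ⊆ Xset := by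
        rintro z ⟨⟨h1, h2⟩, h3, h4⟩
        exact ⟨⟨by linarith, h2⟩, h3, by nlinarith⟩
      calc ENNReal.ofReal (1/8)
          = volume {z : Euc 2 | z 0 ∈ Icc (1/2 : ℝ) 1 ∧ z 1 ∈ Icc (0:ℝ) (1/4)} := by
            rw [vol_box' _ _ measurableSet_Icc measurableSet_Icc, Real.volume_Icc, Real.volume_Icc,
              ← ENNReal.ofReal_mul (by norm_num)]
            norm_num
        _ ≤ volume Xset := measure_mono hsub
    have hc8 : ((volume Xset)⁻¹).toReal ≤ 8 := by
      have h1 : (volume Xset)⁻¹ ≤ (ENNReal.ofReal (1/8))⁻¹ := ENNReal.inv_le_inv' hvol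
      have h2 : ((ENNReal.ofReal (1/8))⁻¹).toReal = 8 := by
        rw [ENNReal.toReal_inv, ENNReal.toReal_ofReal (by norm_num)]
        norm_num
      have h3 : (ENNReal.ofReal (1/8))⁻¹ ≠ ⊤ := by
        simp [ENNReal.inv_ne_top]
      calc ((volume Xset)⁻¹).toReal ≤ ((ENNReal.ofReal (1/8))⁻¹).toReal := ENNReal.toReal_mono h3 h1
        _ = 8 := h2
    show L ^ ((1:ℝ)/((2:ℕ):ℝ)) * ∫ z, Real.exp (-L * Metric.infDist z Xsetᶜ ^ 2)
        ∂((volume Xset)⁻¹ • volume.restrict Xset) ≤ 40 * Real.sqrt Real.pi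
    rw [integral_smul_measure, smul_eq_mul]
    have hpow : L ^ ((1:ℝ)/((2:ℕ):ℝ)) = Real.sqrt L := by
      rw [Real.sqrt_eq_rpow]
      norm_num
    rw [hpow]
    have hsL : 0 < Real.sqrt L := Real.sqrt_pos.mpr hL
    have hπL : Real.sqrt (Real.pi / L) = Real.sqrt Real.pi / Real.sqrt L :=
      Real.sqrt_div Real.pi_pos.le L
    calc Real.sqrt L * (((volume Xset)⁻¹).toReal * ∫ z, Real.exp (-L * Metric.infDist z Xsetᶜ ^ 2) ∂(volume.restrict Xset))
        ≤ Real.sqrt L * (8 * (5 * Real.sqrt (Real.pi / L))) := by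
          apply mul_le_mul_of_nonneg_left _ hsL.le
          exact mul_le_mul hc8 hIle hInn (by norm_num)
      _ = 40 * Real.sqrt Real.pi := by
          rw [hπL]
          field_simp
          ring
  · -- Condition (X2) fails
    rintro ⟨c, hc, hX2⟩
    set r : ℝ := min 1 (c/8) with hrdef
    have hr0 : 0 < r := lt_min one_pos (by positivity)
    have hr1 : r ≤ 1 := min_le_left _ _
    have hrc : r ≤ c/8 := min_le_right _ _
    have hzero : (0 : Euc 2) ∈ 𝒳 := by constructor <;> simp
    have hbd : Bornology.IsBounded 𝒳 := by
      apply (Metric.isBounded_closedBall (x := (0:Euc 2)) (r := 2)).subset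
      intro z hz
      obtain ⟨⟨h1, h2⟩, h3, h4⟩ := hz
      have hz2 : z 1 ≤ 1 := h4.trans (by nlinarith)
      rw [Metric.mem_closedBall, dist_zero_two]
      rw [show (2:ℝ) = Real.sqrt 4 by
        rw [show (4:ℝ) = 2^2 by norm_num, Real.sqrt_sq]; norm_num]
      apply Real.sqrt_le_sqrt; nlinarith
    have hdiam : 1 ≤ Metric.diam 𝒳 := by
      have hp1 : ((WithLp.equiv 2 (Fin 2 → ℝ)).symm ![1,0] : Euc 2) ∈ 𝒳 := by
        constructor <;> simp
      have := Metric.dist_le_diam_of_mem hbd hp1 hzero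
      rw [dist_zero_two] at this
      simpa using this
    have key := hX2 0 hzero r hr0.le (hr1.trans hdiam)
    have hsub : Metric.closedBall (0:Euc 2) r ∩ 𝒳 ⊆ {z : Euc 2 | z 0 ∈ Icc 0 r ∧ z 1 ∈ Icc 0 (r^2)} := by
      rintro z ⟨hball, ⟨h1, h2⟩, h3, h4⟩
      rw [Metric.mem_closedBall, dist_zero_two] at hball
      have h5 : z 0 ≤ r := by
        nlinarith [Real.sq_sqrt (by positivity : (0:ℝ) ≤ (z 0)^2 + (z 1)^2),
          Real.sqrt_nonneg ((z 0)^2 + (z 1)^2), sq_nonneg (z 1)]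
      exact ⟨⟨h1, h5⟩, h3, h4.trans (by nlinarith)⟩
    have hupper : volume (Metric.closedBall (0:Euc 2) r ∩ 𝒳) ≤ ENNReal.ofReal (r * r^2) := by
      calc volume (Metric.closedBall (0:Euc 2) r ∩ 𝒳)
          ≤ volume {z : Euc 2 | z 0 ∈ Icc 0 r ∧ z 1 ∈ Icc 0 (r^2)} := measure_mono hsub
        _ = ENNReal.ofReal (r * r^2) := by
            rw [vol_box' _ _ measurableSet_Icc measurableSet_Icc, Real.volume_Icc, Real.volume_Icc,
              ← ENNReal.ofReal_mul (by linarith)]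
            norm_num
    have hlower : ENNReal.ofReal (r/2 * (r/2)) ≤ volume (Metric.closedBall (0:Euc 2) r) := by
      have hsub2 : {z : Euc 2 | z 0 ∈ Icc 0 (r/2) ∧ z 1 ∈ Icc 0 (r/2)} ⊆ Metric.closedBall (0:Euc 2) r := by
        rintro z ⟨⟨h1, h2⟩, h3, h4⟩
        rw [Metric.mem_closedBall, dist_zero_two]
        rw [show r = Real.sqrt (r^2) by rw [Real.sqrt_sq hr0.le]]
        apply Real.sqrt_le_sqrt; nlinarith
      calc ENNReal.ofReal (r/2 * (r/2))
          = volume {z : Euc 2 | z 0 ∈ Icc 0 (r/2) ∧ z 1 ∈ Icc 0 (r/2)} := by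
            rw [vol_box' _ _ measurableSet_Icc measurableSet_Icc, Real.volume_Icc, sub_zero,
              ← ENNReal.ofReal_mul (by linarith)]
        _ ≤ volume (Metric.closedBall (0:Euc 2) r) := measure_mono hsub2
    have final : ENNReal.ofReal (c * (r/2 * (r/2))) ≤ ENNReal.ofReal (r * r^2) := by
      rw [ENNReal.ofReal_mul hc.le]
      exact le_trans (mul_le_mul_right hlower _) (le_trans key hupper)
    rw [ENNReal.ofReal_le_ofReal_iff (by positivity)] at final
    nlinarith [mul_le_mul_of_nonneg_right hrc (sq_nonneg r), mul_pos hc (mul_pos hr0 hr0)]
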